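/- Let Ω be a metric space with a finite Borel measure σ, σ(Ω) > 0; let F be a finite-dimensional vector space of real-valued square-integrable functions on Ω containing the constant functions, on which the L²(σ) inner product is positive definite, and let G be the linear span of the products φ₁·φ₂ with φ₁,φ₂ ∈ F. Assume Condition (M): the reproducing kernel Φ of F satisfies Φ(ω,ω') = S(d(ω,ω')) for all ω,ω' ∈ Ω, for some function S : [0,∞) → ℝ. If X ⊆ Ω is a finite subset with |X| = dim_ℝ F such that X with the uniform weight W(x) = σ(Ω)/|X| is a cubature formula for G (a tight geometrical design), then S(d(x,y)) = 0 for all x,y ∈ X with x ≠ y. -/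

import Mathlib

open MeasureTheory Finset

/-! If `X` with weights `W` integrates all products of functions in `F` and `|X| = dim F`, then
restriction to `X` is injective on `F` (a function vanishing on `X` has `∫ φ² = 0`), hence
bijective, so `F` contains the Lagrange function `ℓ_y` of each `y ∈ X`. Evaluating its
reproducing identity by cubature gives `0 = ℓ_y(x) = W(y) Φ(y, x)` for `x ≠ y`. -/

section

variable {Ω : Type*}

def restrictTo (F : Submodule ℝ (Ω → ℝ)) (X : Finset Ω) : F →ₗ[ℝ] (X → ℝ) :=
  LinearMap.funLeft ℝ ℝ ((↑) : X → Ω) ∘ₗ F.subtype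

variable [MeasurableSpace Ω]

def IsCubature (σ : Measure Ω) (X : Finset Ω) (W : Ω → ℝ) (G : Submodule ℝ (Ω → ℝ)) : Prop :=
  ∀ φ ∈ G, ∑ x ∈ X, W x * φ x = ∫ ω, φ ω ∂σ

theorem ae_eq_zero_of_integral_mul_self_eq_zero {σ : Measure Ω} {φ : Ω → ℝ}
    (hφ : MemLp φ 2 σ) (h : ∫ ω, φ ω * φ ω ∂σ = 0) : ∀ᵐ ω ∂σ, φ ω = 0 := by
  have hint : Integrable (fun ω => φ ω * φ ω) σ := by
    simpa only [sq] using hφ.integrable_sq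
  have hnn : 0 ≤ᵐ[σ] fun ω => φ ω * φ ω := .of_forall fun ω => mul_self_nonneg _
  filter_upwards [(integral_eq_zero_iff_of_nonneg_ae hnn hint).mp h] with ω hω
  exact mul_self_eq_zero.mp hω

namespace IsCubature

variable {σ : Measure Ω} {X : Finset Ω} {W : Ω → ℝ} {F G : Submodule ℝ (Ω → ℝ)}

theorem restrictTo_injective (hcub : IsCubature σ X W G)
    (hmul : ∀ φ₁ ∈ F, ∀ φ₂ ∈ F, φ₁ * φ₂ ∈ G) (hL2 : ∀ φ ∈ F, MemLp φ 2 σ)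
    (hpd : ∀ φ ∈ F, (∀ᵐ ω ∂σ, φ ω = 0) → φ = 0) :
    Function.Injective (restrictTo F X) := by
  rw [injective_iff_map_eq_zero]
  intro φ hφ
  have hsq : ∫ ω, ((φ : Ω → ℝ) * φ) ω ∂σ = 0 := by
    rw [← hcub _ (hmul _ φ.2 _ φ.2)]
    refine Finset.sum_eq_zero fun z hz => ?_
    simp [show (φ : Ω → ℝ) z = 0 from congrFun hφ ⟨z, hz⟩]
  exact Subtype.ext <| hpd _ φ.2 <| ae_eq_zero_of_integral_mul_self_eq_zero (hL2 _ φ.2) hsq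

theorem exists_mem_eqOn_of_card_eq_finrank [FiniteDimensional ℝ F]
    (hcub : IsCubature σ X W G)
    (hmul : ∀ φ₁ ∈ F, ∀ φ₂ ∈ F, φ₁ * φ₂ ∈ G) (hL2 : ∀ φ ∈ F, MemLp φ 2 σ)
    (hpd : ∀ φ ∈ F, (∀ᵐ ω ∂σ, φ ω = 0) → φ = 0) (htight : X.card = Module.finrank ℝ F)
    (g : Ω → ℝ) : ∃ φ ∈ F, Set.EqOn φ g X := by
  have hdim : Module.finrank ℝ F = Module.finrank ℝ (X → ℝ) := by simp [htight]
  obtain ⟨φ, hφ⟩ := (LinearMap.injective_iff_surjective_of_finrank_eq_finrank hdim).mp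
    (hcub.restrictTo_injective hmul hL2 hpd) fun z => g z
  exact ⟨φ, φ.2, fun z hz => congrFun hφ ⟨z, hz⟩⟩

theorem apply_eq_sum_mul_kernel (hcub : IsCubature σ X W G)
    (hmul : ∀ φ₁ ∈ F, ∀ φ₂ ∈ F, φ₁ * φ₂ ∈ G) {Φ : Ω → Ω → ℝ}
    (hΦmem : ∀ ω, (fun ω' => Φ ω' ω) ∈ F) (hΦrepr : ∀ φ ∈ F, ∀ ω, ∫ x, φ x * Φ x ω ∂σ = φ ω)
    {φ : Ω → ℝ} (hφ : φ ∈ F) (ω : Ω) : φ ω = ∑ x ∈ X, W x * (φ x * Φ x ω) := by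
  rw [← hΦrepr φ hφ ω]
  exact (hcub _ (hmul _ hφ _ (hΦmem ω))).symm

theorem kernel_eq_zero_of_card_eq_finrank [FiniteDimensional ℝ F]
    (hcub : IsCubature σ X W G) (hW : ∀ x ∈ X, 0 < W x) (hmul : ∀ φ₁ ∈ F, ∀ φ₂ ∈ F, φ₁ * φ₂ ∈ G)
    (hL2 : ∀ φ ∈ F, MemLp φ 2 σ) (hpd : ∀ φ ∈ F, (∀ᵐ ω ∂σ, φ ω = 0) → φ = 0)
    (htight : X.card = Module.finrank ℝ F) {Φ : Ω → Ω → ℝ}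
    (hΦmem : ∀ ω, (fun ω' => Φ ω' ω) ∈ F) (hΦrepr : ∀ φ ∈ F, ∀ ω, ∫ x, φ x * Φ x ω ∂σ = φ ω)
    {x y : Ω} (hx : x ∈ X) (hy : y ∈ X) (hxy : x ≠ y) : Φ y x = 0 := by
  classical
  obtain ⟨φ, hφF, hφ⟩ :=
    hcub.exists_mem_eqOn_of_card_eq_finrank hmul hL2 hpd htight (Pi.single y 1)
  have hsum : ∑ z ∈ X, W z * (φ z * Φ z x) = W y * Φ y x := by
    rw [Finset.sum_eq_single_of_mem y hy fun z hz hzy => ?_]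
    · simp [hφ hy]
    · simp [hφ hz, hzy]
  have : W y * Φ y x = 0 := by
    rw [← hsum, ← hcub.apply_eq_sum_mul_kernel hmul hΦmem hΦrepr hφF, hφ hx,
      Pi.single_eq_of_ne hxy]
  exact (mul_eq_zero.mp this).resolve_left (hW y hy).ne'

end IsCubature

end

theorem tight_design_distances_are_zeros_of_kernel_general
    {Ω : Type*} [MetricSpace Ω] [MeasurableSpace Ω]
    (σ : Measure Ω) [IsFiniteMeasure σ] (hσ : 0 < σ Set.univ)
    (F G : Submodule ℝ (Ω → ℝ)) [FiniteDimensional ℝ F]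
    (hL2 : ∀ φ ∈ F, MemLp φ 2 σ)
    (hpd : ∀ φ ∈ F, (∀ᵐ ω ∂σ, φ ω = 0) → φ = 0)
    (hG : G = Submodule.span ℝ {f : Ω → ℝ | ∃ φ₁ ∈ F, ∃ φ₂ ∈ F, f = φ₁ * φ₂})
    (Φ : Ω → Ω → ℝ)
    (hΦmem : ∀ ω : Ω, (fun ω' => Φ ω' ω) ∈ F)
    (hΦrepr : ∀ φ ∈ F, ∀ ω : Ω, ∫ x, φ x * Φ x ω ∂σ = φ ω)
    (S : ℝ → ℝ)
    (hCondM : ∀ ω ω' : Ω, Φ ω ω' = S (dist ω ω'))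
    (X : Finset Ω)
    (htight : X.card = Module.finrank ℝ F)
    (hcub : ∀ φ ∈ G,
      ∑ x ∈ X, ((σ Set.univ).toReal / X.card) * φ x = ∫ ω, φ ω ∂σ) :
    ∀ x ∈ X, ∀ y ∈ X, x ≠ y → S (dist x y) = 0 := by
  intro x hx y hy hxy
  have hmul : ∀ φ₁ ∈ F, ∀ φ₂ ∈ F, φ₁ * φ₂ ∈ G := fun φ₁ h₁ φ₂ h₂ =>
    hG ▸ Submodule.subset_span ⟨φ₁, h₁, φ₂, h₂, rfl⟩
  have hW : ∀ z ∈ X, 0 < (σ Set.univ).toReal / X.card := fun _ _ =>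
    div_pos (ENNReal.toReal_pos hσ.ne' (measure_ne_top σ _))
      (Nat.cast_pos.mpr (Finset.card_pos.mpr ⟨x, hx⟩))
  rw [dist_comm, ← hCondM]
  exact IsCubature.kernel_eq_zero_of_card_eq_finrank (W := fun _ => _) hcub hW hmul hL2 hpd
    htight hΦmem hΦrepr hx hy hxy

/-- for a tight geometrical design `X` (uniform weight, `|X| = dim F`) on a
metric measure space satisfying Condition (M) — the reproducing kernel `Φ` of `F` is a
function `S` of the distance — all distances between distinct points of `X` are zeros
of `S`. -/
theorem tight_design_distances_are_zeros_of_kernel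
    {Ω : Type*} [MetricSpace Ω] [MeasurableSpace Ω] [BorelSpace Ω]
    (σ : Measure Ω) [IsFiniteMeasure σ] (hσ : 0 < σ Set.univ)
    (F G : Submodule ℝ (Ω → ℝ)) [FiniteDimensional ℝ F]
    (hL2 : ∀ φ ∈ F, MemLp φ 2 σ)
    (hconst : ∀ c : ℝ, (fun _ : Ω => c) ∈ F)
    (hpd : ∀ φ ∈ F, (∀ᵐ ω ∂σ, φ ω = 0) → φ = 0)
    (hG : G = Submodule.span ℝ {f : Ω → ℝ | ∃ φ₁ ∈ F, ∃ φ₂ ∈ F, f = φ₁ * φ₂})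
    (Φ : Ω → Ω → ℝ)
    (hΦmem : ∀ ω : Ω, (fun ω' => Φ ω' ω) ∈ F)
    (hΦrepr : ∀ φ ∈ F, ∀ ω : Ω, ∫ x, φ x * Φ x ω ∂σ = φ ω)
    (S : ℝ → ℝ)
    (hCondM : ∀ ω ω' : Ω, Φ ω ω' = S (dist ω ω'))
    (X : Finset Ω)
    (htight : X.card = Module.finrank ℝ F)
    (hcub : ∀ φ ∈ G,
      ∑ x ∈ X, ((σ Set.univ).toReal / X.card) * φ x = ∫ ω, φ ω ∂σ) :
    ∀ x ∈ X, ∀ y ∈ X, x ≠ y → S (dist x y) = 0 :=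
  tight_design_distances_are_zeros_of_kernel_general σ hσ F G hL2 hpd hG Φ hΦmem hΦrepr S hCondM X
    htight hcub
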